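/- arXiv:2301.12143 — 3 statements merged into one kernel-verified Lean document; each statement's English description precedes it below -/
import Mathlib

section
/- For every complex number s with Re s > 0 and s ≠ 1, the integral ∫_ℝ (u − i)² · (1 + u²)^{-(s+3)/2} du (a ℂ-valued integral over the real line, where i is the imaginary unit) converges and equals − Γ_ℝ(s) · Γ_ℝ(s+1) / (Γ_ℝ(s+3) · Γ_ℝ(s−1)). (This is the integral identity underlying Lemma 'ai' of the paper: after the Iwasawa decomposition of the SL₂(ℝ)-matrix J⁻¹·(1 u; 0 1) with J = (0 1; −1 0), the integral ∫_ℝ h^{(s)}(J⁻¹(1 u; 0 1)) du takes exactly this form, and Lemma 'ai' asserts it equals −Γ_ℝ(s)Γ_ℝ(s+1)/(Γ_ℝ(s+3)Γ_ℝ(s−1)).) -/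
/-!
Expanding `(u - i)² = (1 + u²) - 2 - 2iu` splits the integral into `I(s) - 2 I(s + 2)` plus `-2i`
times the integral of an odd function, where `I(s) = ∫ (1 + u²)^{-(s+1)/2} du`. The substitution
`x = u² / (1 + u²)` on `u > 0` turns `I(s)` into the Beta integral `B(1/2, s/2)`, which gives
`I(s) = Γ_ℝ(s) / Γ_ℝ(s + 1)`. The recursion `Γ_ℝ(s + 2) = Γ_ℝ(s) s / (2π)` then reduces both sides
to `Γ_ℝ(s) / Γ_ℝ(s + 1) · (1 - s) / (1 + s)`.
-/

open MeasureTheory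

/-- `Γ_ℝ(z) = π^{-z/2} Γ(z/2)`. -/
noncomputable def GammaR (z : ℂ) : ℂ := (Real.pi : ℂ) ^ (-z / 2) * Complex.Gamma (z / 2)

open Set Complex

lemma ofReal_cpow_eq_exp_log_mul {x : ℝ} (hx : 0 < x) (z : ℂ) :
    (x : ℂ) ^ z = exp (Real.log x * z) := by
  rw [cpow_def_of_ne_zero (ofReal_ne_zero.mpr hx.ne'), ofReal_log hx.le]

lemma hasDerivAt_sq_div_one_add_sq (u : ℝ) :
    HasDerivAt (fun u : ℝ => u ^ 2 / (1 + u ^ 2)) (2 * u / (1 + u ^ 2) ^ 2) u := by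
  have hw : 1 + u ^ 2 ≠ 0 := by positivity
  refine ((hasDerivAt_pow 2 u).div ((hasDerivAt_pow 2 u).const_add 1) hw).congr_deriv ?_
  field_simp
  ring

lemma strictMonoOn_sq_div_one_add_sq : StrictMonoOn (fun u : ℝ => u ^ 2 / (1 + u ^ 2)) (Ioi 0) := by
  intro u hu v _ huv
  rw [mem_Ioi] at hu
  simp only
  rw [div_lt_div_iff₀ (by positivity) (by positivity)]
  nlinarith [mul_lt_mul'' huv huv hu.le hu.le]

lemma image_sq_div_one_add_sq_Ioi : (fun u : ℝ => u ^ 2 / (1 + u ^ 2)) '' Ioi 0 = Ioo 0 1 := by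
  ext x
  constructor
  · rintro ⟨u, hu, rfl⟩
    rw [mem_Ioi] at hu
    exact ⟨by positivity, (div_lt_one (by positivity)).mpr (by linarith)⟩
  · rintro ⟨hx0, hx1⟩
    have h1x : 0 < 1 - x := by linarith
    refine ⟨√(x / (1 - x)), Real.sqrt_pos.mpr (by positivity), ?_⟩
    simp only
    rw [Real.sq_sqrt (by positivity)]
    field_simp
    ring

lemma betaIntegral_eq_two_mul_integral_Ioi (a b : ℂ) :
    betaIntegral a b =
      2 * ∫ u in Ioi (0 : ℝ), (u : ℂ) ^ (2 * a - 1) * ((1 + u ^ 2 : ℝ) : ℂ) ^ (-(a + b)) := by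
  rw [betaIntegral, intervalIntegral.integral_of_le zero_le_one, integral_Ioc_eq_integral_Ioo,
    ← image_sq_div_one_add_sq_Ioi,
    integral_image_eq_integral_abs_deriv_smul measurableSet_Ioi
      (fun u _ => (hasDerivAt_sq_div_one_add_sq u).hasDerivWithinAt)
      strictMonoOn_sq_div_one_add_sq.injOn,
    ← integral_const_mul]
  refine setIntegral_congr_fun measurableSet_Ioi fun u (hu : 0 < u) => ?_
  have hw : 0 < 1 + u ^ 2 := by positivity
  have h1 : 1 - ((u ^ 2 / (1 + u ^ 2) : ℝ) : ℂ) = (((1 + u ^ 2)⁻¹ : ℝ) : ℂ) := by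
    have hwC : (1 + (u : ℂ) ^ 2) ≠ 0 := by exact_mod_cast hw.ne'
    push_cast
    field_simp
    ring
  have h2 : |2 * u / (1 + u ^ 2) ^ 2| = 2 * Real.exp (Real.log u - 2 * Real.log (1 + u ^ 2)) := by
    rw [abs_of_pos (by positivity), Real.exp_sub, Real.exp_log hu,
      ← Real.log_rpow (by positivity), Real.exp_log (by positivity)]
    norm_cast
    ring
  rw [h1, h2, real_smul, ofReal_cpow_eq_exp_log_mul (by positivity),
    ofReal_cpow_eq_exp_log_mul (by positivity), ofReal_cpow_eq_exp_log_mul hu,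
    ofReal_cpow_eq_exp_log_mul hw, Real.log_div (by positivity) hw.ne', Real.log_pow,
    Real.log_inv]
  push_cast
  rw [mul_assoc, ← exp_add, ← exp_add, ← exp_add]
  congr 2
  ring

lemma integral_eq_two_smul_integral_Ioi_of_even {E : Type*} [NormedAddCommGroup E]
    [NormedSpace ℝ E] {f : ℝ → E} (hf : Integrable f) (heven : ∀ x, f (-x) = f x) :
    ∫ x, f x = (2 : ℝ) • ∫ x in Ioi 0, f x := by
  have hIic : ∫ x in Iic 0, f x = ∫ x in Ioi 0, f x := by
    rw [← neg_zero, ← integral_comp_neg_Ioi]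
    simp only [heven, neg_zero]
  rw [← intervalIntegral.integral_Iic_add_Ioi hf.integrableOn hf.integrableOn, hIic, two_smul]

lemma integral_eq_zero_of_odd {E : Type*} [NormedAddCommGroup E] [NormedSpace ℝ E]
    {f : ℝ → E} (hodd : ∀ x, f (-x) = -f x) : ∫ x, f x = 0 := by
  have h := integral_neg_eq_self f volume
  simp only [hodd, integral_neg] at h
  have h2 : (2 : ℝ) • ∫ x, f x = 0 := by
    rw [two_smul]
    nth_rw 1 [← h]
    exact neg_add_cancel _
  exact (smul_eq_zero.mp h2).resolve_left two_ne_zero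

lemma norm_one_add_sq_cpow (u : ℝ) (z : ℂ) :
    ‖((1 + u ^ 2 : ℝ) : ℂ) ^ z‖ = (1 + u ^ 2) ^ z.re :=
  norm_cpow_eq_rpow_re_of_pos (by positivity) z

lemma continuous_one_add_sq_cpow (z : ℂ) :
    Continuous fun u : ℝ => ((1 + u ^ 2 : ℝ) : ℂ) ^ z :=
  (continuous_ofReal.comp (by fun_prop)).cpow continuous_const
    fun u => ofReal_mem_slitPlane.mpr (by positivity)

lemma integrable_one_add_sq_cpow {s : ℂ} (hs : 0 < s.re) :
    Integrable fun u : ℝ => ((1 + u ^ 2 : ℝ) : ℂ) ^ (-(s + 1) / 2) := by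
  refine (integrable_rpow_neg_one_add_norm_sq (r := s.re + 1) (by simpa using hs)).mono'
    (continuous_one_add_sq_cpow _).aestronglyMeasurable (.of_forall fun u => ?_)
  rw [norm_one_add_sq_cpow, Real.norm_eq_abs, sq_abs]
  apply le_of_eq
  congr 1
  simp

lemma integrable_mul_one_add_sq_cpow {s : ℂ} (hs : 1 < s.re) :
    Integrable fun u : ℝ => (u : ℂ) * ((1 + u ^ 2 : ℝ) : ℂ) ^ (-(s + 1) / 2) := by
  refine (integrable_one_add_sq_cpow (s := s - 1) (by simpa using hs)).norm.mono'
    (by fun_prop) (.of_forall fun u => ?_)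
  have hw : 0 < 1 + u ^ 2 := by positivity
  have hu : |u| ≤ (1 + u ^ 2) ^ (1 / 2 : ℝ) := by
    rw [← Real.sqrt_eq_rpow, ← Real.sqrt_sq_eq_abs]
    exact Real.sqrt_le_sqrt (by linarith)
  calc ‖(u : ℂ) * ((1 + u ^ 2 : ℝ) : ℂ) ^ (-(s + 1) / 2)‖
      = |u| * (1 + u ^ 2) ^ (-(s + 1) / 2).re := by
        rw [norm_mul, norm_one_add_sq_cpow, norm_real, Real.norm_eq_abs]
    _ ≤ (1 + u ^ 2) ^ (1 / 2 : ℝ) * (1 + u ^ 2) ^ (-(s + 1) / 2).re := by gcongr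
    _ = ‖((1 + u ^ 2 : ℝ) : ℂ) ^ (-(s - 1 + 1) / 2)‖ := by
      rw [← Real.rpow_add hw, norm_one_add_sq_cpow]
      congr 1
      simp [neg_div]
      ring

lemma betaIntegral_half_eq_Gammaℝ {a b : ℂ} (ha : 0 < a.re) (hb : 0 < b.re) :
    betaIntegral (a / 2) (b / 2) = Gammaℝ a * Gammaℝ b / Gammaℝ (a + b) := by
  have hπ : (Real.pi : ℂ) ≠ 0 := ofReal_ne_zero.mpr Real.pi_ne_zero
  have hπpow : (Real.pi : ℂ) ^ (-(a + b) / 2) = Real.pi ^ (-a / 2) * Real.pi ^ (-b / 2) := by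
    rw [← cpow_add _ _ hπ]
    ring_nf
  rw [betaIntegral_eq_Gamma_mul_div _ _ (by simpa using ha) (by simpa using hb), Gammaℝ_def,
    Gammaℝ_def, Gammaℝ_def, hπpow, add_div]
  have : (Real.pi : ℂ) ^ (-a / 2) ≠ 0 := by simp [hπ]
  have : (Real.pi : ℂ) ^ (-b / 2) ≠ 0 := by simp [hπ]
  field_simp

lemma integral_one_add_sq_cpow {s : ℂ} (hs : 0 < s.re) :
    ∫ u : ℝ, ((1 + u ^ 2 : ℝ) : ℂ) ^ (-(s + 1) / 2) = Gammaℝ s / Gammaℝ (s + 1) := by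
  have hintegrand : ∀ u : ℝ,
      (u : ℂ) ^ (2 * (1 / 2 : ℂ) - 1) * ((1 + u ^ 2 : ℝ) : ℂ) ^ (-(1 / 2 + s / 2)) =
        ((1 + u ^ 2 : ℝ) : ℂ) ^ (-(s + 1) / 2) := fun u => by
    rw [show 2 * (1 / 2 : ℂ) - 1 = 0 by norm_num, cpow_zero, one_mul]
    ring_nf
  have hbeta := betaIntegral_eq_two_mul_integral_Ioi (1 / 2) (s / 2)
  simp_rw [hintegrand] at hbeta
  rw [integral_eq_two_smul_integral_Ioi_of_even (integrable_one_add_sq_cpow hs)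
    fun u => by rw [neg_sq], real_smul, ofReal_ofNat, ← hbeta,
    betaIntegral_half_eq_Gammaℝ one_pos hs, Gammaℝ_one, one_mul, add_comm]

lemma Gammaℝ_sub_one_ne_zero {s : ℂ} (hs : 0 < s.re) (hs1 : s ≠ 1) : Gammaℝ (s - 1) ≠ 0 := by
  rw [Ne, Gammaℝ_eq_zero_iff]
  rintro ⟨n, hn⟩
  have hre : s.re - 1 = -(2 * n) := by simpa using congrArg re hn
  obtain rfl : n = 0 := by
    by_contra hn0
    have : (1 : ℝ) ≤ n := by exact_mod_cast Nat.one_le_iff_ne_zero.mpr hn0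
    linarith
  exact hs1 (by simpa [sub_eq_zero] using hn)

lemma Gammaℝ_div_sub_two_mul_Gammaℝ_div {s : ℂ} (hs : 0 < s.re) (hs1 : s ≠ 1) :
    Gammaℝ s / Gammaℝ (s + 1) - 2 * (Gammaℝ (s + 2) / Gammaℝ (s + 3)) =
      -(Gammaℝ s * Gammaℝ (s + 1)) / (Gammaℝ (s + 3) * Gammaℝ (s - 1)) := by
  have hπ : (Real.pi : ℂ) ≠ 0 := ofReal_ne_zero.mpr Real.pi_ne_zero
  have hs0 : s ≠ 0 := by rintro rfl; simp at hs
  have hsp : s + 1 ≠ 0 := by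
    intro h
    have := congrArg re h
    simp only [add_re, one_re, zero_re] at this
    linarith
  have hsm : s - 1 ≠ 0 := sub_ne_zero.mpr hs1
  have h0 := Gammaℝ_sub_one_ne_zero hs hs1
  have e1 : Gammaℝ (s + 1) = Gammaℝ (s - 1) * (s - 1) / 2 / Real.pi := by
    rw [← Gammaℝ_add_two hsm]
    ring_nf
  have e3 : Gammaℝ (s + 3) = Gammaℝ (s + 1) * (s + 1) / 2 / Real.pi := by
    rw [← Gammaℝ_add_two hsp]
    ring_nf
  rw [e3, Gammaℝ_add_two hs0, e1]
  field_simp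
  ring

lemma sub_I_sq_mul_one_add_sq_cpow (u : ℝ) (s : ℂ) :
    ((u : ℂ) - I) ^ 2 * ((1 + u ^ 2 : ℝ) : ℂ) ^ (-(s + 3) / 2) =
      ((1 + u ^ 2 : ℝ) : ℂ) ^ (-(s + 1) / 2) - 2 * ((1 + u ^ 2 : ℝ) : ℂ) ^ (-(s + 3) / 2) -
        2 * I * ((u : ℂ) * ((1 + u ^ 2 : ℝ) : ℂ) ^ (-(s + 3) / 2)) := by
  have hw : ((1 + u ^ 2 : ℝ) : ℂ) ≠ 0 := ofReal_ne_zero.mpr (by positivity)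
  rw [show -(s + 1) / 2 = 1 + -(s + 3) / 2 by ring, cpow_add _ _ hw, cpow_one]
  push_cast
  linear_combination (1 + (u : ℂ) ^ 2) ^ (-(s + 3) / 2) * I_sq

lemma GammaR_eq_Gammaℝ : GammaR = Gammaℝ := rfl

/-- For `Re s > 0`, `s ≠ 1`, the integral `∫_ℝ (u−i)² (1+u²)^{-(s+3)/2} du`
converges and equals `−Γ_ℝ(s)Γ_ℝ(s+1)/(Γ_ℝ(s+3)Γ_ℝ(s−1))`. -/
theorem stmt3 (s : ℂ) (hs : 0 < s.re) (hs1 : s ≠ 1) :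
    Integrable (fun u : ℝ => ((u : ℂ) - Complex.I) ^ 2 * ((1 + u ^ 2 : ℝ) : ℂ) ^ (-(s + 3) / 2)) ∧
    ∫ u : ℝ, ((u : ℂ) - Complex.I) ^ 2 * ((1 + u ^ 2 : ℝ) : ℂ) ^ (-(s + 3) / 2) =
      -(GammaR s * GammaR (s + 1)) / (GammaR (s + 3) * GammaR (s - 1)) := by
  have hs2 : 0 < (s + 2).re := by simp only [add_re, re_ofNat]; linarith
  have hexp : s + 2 + 1 = s + 3 := by ring
  have hF := integrable_one_add_sq_cpow hs
  have hF₂ := integrable_one_add_sq_cpow hs2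
  have hG₂ := integrable_mul_one_add_sq_cpow (s := s + 2)
    (by simp only [add_re, re_ofNat]; linarith)
  rw [hexp] at hF₂ hG₂
  have hodd : ∫ u : ℝ, (u : ℂ) * ((1 + u ^ 2 : ℝ) : ℂ) ^ (-(s + 3) / 2) = 0 :=
    integral_eq_zero_of_odd fun u => by rw [neg_sq, ofReal_neg, neg_mul]
  have hF_sub : Integrable fun u : ℝ => ((1 + u ^ 2 : ℝ) : ℂ) ^ (-(s + 1) / 2) -
      2 * ((1 + u ^ 2 : ℝ) : ℂ) ^ (-(s + 3) / 2) := hF.sub (hF₂.const_mul 2)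
  simp_rw [sub_I_sq_mul_one_add_sq_cpow]
  refine ⟨hF_sub.sub (hG₂.const_mul _), ?_⟩
  rw [integral_sub hF_sub (hG₂.const_mul _), integral_sub hF (hF₂.const_mul 2),
    integral_const_mul, integral_const_mul, hodd, mul_zero, sub_zero, integral_one_add_sq_cpow hs,
    ← hexp, integral_one_add_sq_cpow hs2, hexp, GammaR_eq_Gammaℝ]
  exact Gammaℝ_div_sub_two_mul_Gammaℝ_div hs hs1
end

section
/- Let m ≥ 1 and let A ∈ Sp(2m, ℂ) be a symplectic matrix which is diagonalizable, i.e. there exists an invertible P ∈ M_{2m}(ℂ) such that P⁻¹·A·P is a diagonal matrix. Then there exist S ∈ Sp(2m, ℂ) and an invertible diagonal matrix D ∈ M_m(ℂ) such that S⁻¹·A·S is the block matrix with diagonal blocks D and D⁻¹ and zero off-diagonal blocks. (This is the classification, asserted in Section 1.1.3 of the paper, of semisimple elements of Sp(2m,ℂ) up to Sp(2m,ℂ)-conjugacy: every such element is conjugate within the symplectic group to a 'balanced' diagonal element.) -/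
/-!
Let `ω x y = xᵀ J y`. Since `A` preserves `ω`, eigenvectors of `A` with eigenvalues `ν`, `μ` are
`ω`-orthogonal unless `ν μ = 1`, and since `A` is diagonalizable, every `A`-invariant subspace is
spanned by the eigenvectors it contains. So in an `A`-invariant, `ω`-nondegenerate subspace `W`
one finds an eigenvector `v` (eigenvalue `ν`) and a partner `w ∈ W` with eigenvalue `ν⁻¹` and
`ω v w = -1`; the `ω`-orthogonal of `{v, w}` in `W` is again invariant and nondegenerate, of
dimension two less. Recursing from `W = ℂ²ᵐ` produces a symplectic basis of eigenvectors, whose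
matrix is the required `S`.
-/

open Matrix Module End

section BilinForm

variable {𝕜 V : Type*} [Field 𝕜] [AddCommGroup V] [Module 𝕜 V]
  {B : LinearMap.BilinForm 𝕜 V} {φ : End 𝕜 V}

theorem Submodule.finrank_inf_ker_add_of_map_eq_top {U : Type*} [AddCommGroup U] [Module 𝕜 U]
    (W : Submodule 𝕜 V) [FiniteDimensional 𝕜 W] (L : V →ₗ[𝕜] U) (h : W.map L = ⊤) :
    finrank 𝕜 ↥(W ⊓ LinearMap.ker L) + finrank 𝕜 U = finrank 𝕜 W := by
  have := (L.domRestrict W).finrank_range_add_finrank_ker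
  rwa [LinearMap.range_domRestrict, h, finrank_top, LinearMap.ker_domRestrict,
    ← Submodule.finrank_map_subtype_eq, Submodule.map_comap_subtype, add_comm] at this

namespace LinearMap.BilinForm.IsAlt

theorem apply_sumElim_cons_eq_J (hB : B.IsAlt) {r : ℕ} {v w : V} (hvw : B v w = -1)
    {b : Fin r ⊕ Fin r → V} (hb : ∀ i j, B (b i) (b j) = Matrix.J (Fin r) 𝕜 i j)
    (hbv : ∀ i, B v (b i) = 0) (hbw : ∀ i, B w (b i) = 0) (i j : Fin (r + 1) ⊕ Fin (r + 1)) :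
    B (Sum.elim (Fin.cons v (b ∘ Sum.inl)) (Fin.cons w (b ∘ Sum.inr)) i)
      (Sum.elim (Fin.cons v (b ∘ Sum.inl)) (Fin.cons w (b ∘ Sum.inr)) j) =
      Matrix.J (Fin (r + 1)) 𝕜 i j := by
  have hvb : ∀ i, B (b i) v = 0 := fun i => by rw [← hB.neg_eq, hbv, neg_zero]
  have hwb : ∀ i, B (b i) w = 0 := fun i => by rw [← hB.neg_eq, hbw, neg_zero]
  have hwv : B w v = 1 := by rw [← hB.neg_eq, hvw, neg_neg]
  revert i j
  simp only [Sum.forall, Fin.forall_fin_succ]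
  simp [Matrix.J, hb, hvw, hwv, hbv, hbw, hvb, hwb, hB.self_eq_zero, Matrix.one_apply,
    (Fin.succ_ne_zero _).symm]

variable (hB : B.IsAlt) {W : Submodule 𝕜 V} {v w : V} (hvW : v ∈ W) (hwW : w ∈ W)
  (hvw : B v w = -1)
include hB hvW hwW hvw

theorem map_prod_eq_top : W.map ((B v).prod (B w)) = ⊤ := by
  have hwv : B w v = 1 := by rw [← hB.neg_eq, hvw, neg_neg]
  refine eq_top_iff.mpr fun ⟨a, c⟩ _ =>
    ⟨c • v - a • w, W.sub_mem (W.smul_mem c hvW) (W.smul_mem a hwW), ?_⟩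
  simp [hvw, hwv, hB.self_eq_zero]

theorem separatingLeft_restrict_inf_ker (hnd : (B.restrict W).SeparatingLeft) :
    (B.restrict (W ⊓ LinearMap.ker (B v) ⊓ LinearMap.ker (B w))).SeparatingLeft := by
  have hwv : B w v = 1 := by rw [← hB.neg_eq, hvw, neg_neg]
  rintro ⟨x, hx'⟩ hx
  obtain ⟨⟨hxW, hxv : B v x = 0⟩, hxw : B w x = 0⟩ := hx'
  have hxv' : B x v = 0 := by rw [← hB.neg_eq, hxv, neg_zero]
  have hxw' : B x w = 0 := by rw [← hB.neg_eq, hxw, neg_zero]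
  -- `y ↦ y - B w y • v + B v y • w` projects `W` onto `W ⊓ ker (B v) ⊓ ker (B w)`
  have hx₀ : ∀ y ∈ W, B x y = 0 := by
    intro y hy
    have h := hx ⟨y - B w y • v + B v y • w,
      ⟨W.add_mem (W.sub_mem hy (W.smul_mem _ hvW)) (W.smul_mem _ hwW), by
        simp [hvw, hB.self_eq_zero]⟩, by simp [hwv, hB.self_eq_zero]⟩
    simpa [hxv', hxw'] using h
  exact Subtype.ext (congrArg Subtype.val (hnd ⟨x, hxW⟩ fun y => hx₀ y y.2) :)

end LinearMap.BilinForm.IsAlt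

theorem Module.End.exists_ne_zero_mem_inf_eigenspace [FiniteDimensional 𝕜 V]
    (hdiag : ⨆ μ, φ.eigenspace μ = ⊤) {W : Submodule 𝕜 V} (hW : ∀ x ∈ W, φ x ∈ W)
    (hW₀ : W ≠ ⊥) : ∃ μ, ∃ v ∈ W ⊓ φ.eigenspace μ, v ≠ 0 := by
  by_contra! h
  refine hW₀ ?_
  rw [Submodule.eq_iSup_inf_genEigenspace 1 hW hdiag]
  exact iSup_eq_bot.mpr fun μ => (Submodule.eq_bot_iff _).mpr (h μ)

namespace LinearMap.IsOrthogonal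

variable (hφ : B.IsOrthogonal φ)
include hφ

theorem mul_eq_one_of_apply_ne_zero {ν μ : 𝕜} {x y : V} (hx : x ∈ φ.eigenspace ν)
    (hy : y ∈ φ.eigenspace μ) (hxy : B x y ≠ 0) : ν * μ = 1 := by
  have h := hφ x y
  rw [mem_eigenspace_iff.mp hx, mem_eigenspace_iff.mp hy] at h
  simp only [map_smul, LinearMap.smul_apply, smul_eq_mul] at h
  exact mul_right_cancel₀ hxy (by linear_combination h)

theorem apply_map_eq_zero_of_mem_eigenspace {ν : 𝕜} (hν : ν ≠ 0) {v y : V}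
    (hv : v ∈ φ.eigenspace ν) (hy : B v y = 0) : B v (φ y) = 0 := by
  have h := hφ v y
  rw [mem_eigenspace_iff.mp hv, hy] at h
  simpa [hν] using h

variable [FiniteDimensional 𝕜 V] (hdiag : ⨆ μ, φ.eigenspace μ = ⊤)
include hdiag

theorem exists_mem_inf_eigenspace_inv_apply_eq_neg_one {W : Submodule 𝕜 V}
    (hW : ∀ x ∈ W, φ x ∈ W) (hnd : (B.restrict W).SeparatingLeft) {ν : 𝕜} {v : V}
    (hvW : v ∈ W) (hv : v ∈ φ.eigenspace ν) (hv₀ : v ≠ 0) :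
    ∃ w ∈ W ⊓ φ.eigenspace ν⁻¹, B v w = -1 := by
  have hW_ker : ¬ W ≤ LinearMap.ker (B v) := fun h =>
    hv₀ (congrArg Subtype.val (hnd ⟨v, hvW⟩ fun y => h y.2) :)
  rw [Submodule.eq_iSup_inf_genEigenspace 1 hW hdiag, iSup_le_iff, not_forall] at hW_ker
  obtain ⟨μ, hμ⟩ := hW_ker
  obtain ⟨z, ⟨hzW, hzμ⟩, hz⟩ := SetLike.not_le_iff_exists.mp hμ
  obtain rfl : μ = ν⁻¹ :=
    eq_inv_of_mul_eq_one_right (hφ.mul_eq_one_of_apply_ne_zero hv hzμ hz)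
  exact ⟨-(B v z)⁻¹ • z, Submodule.smul_mem _ _ ⟨hzW, hzμ⟩, by
    simp [inv_mul_cancel₀ (LinearMap.mem_ker.not.mp hz)]⟩

theorem exists_symplectic_eigenfamily (hB : B.IsAlt) (r : ℕ) {W : Submodule 𝕜 V}
    (hW : ∀ x ∈ W, φ x ∈ W) (hnd : (B.restrict W).SeparatingLeft)
    (hr : finrank 𝕜 W = 2 * r) :
    ∃ (b : Fin r ⊕ Fin r → V) (d : Fin r → 𝕜), (∀ i, b i ∈ W) ∧
      (∀ i j, B (b i) (b j) = Matrix.J (Fin r) 𝕜 i j) ∧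
      ∀ i, b i ∈ φ.eigenspace (Sum.elim d d⁻¹ i) := by
  induction r generalizing W with
  | zero => exact ⟨isEmptyElim, isEmptyElim, isEmptyElim, isEmptyElim, isEmptyElim⟩
  | succ r ih =>
    have hW₀ : W ≠ ⊥ := by rintro rfl; simp at hr
    obtain ⟨ν, v, ⟨hvW, hv⟩, hv₀⟩ := exists_ne_zero_mem_inf_eigenspace hdiag hW hW₀
    obtain ⟨w, ⟨hwW, hw⟩, hvw⟩ :=
      hφ.exists_mem_inf_eigenspace_inv_apply_eq_neg_one hdiag hW hnd hvW hv hv₀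
    have hν : ν ≠ 0 := left_ne_zero_of_mul_eq_one
      (hφ.mul_eq_one_of_apply_ne_zero hv hw (by simp [hvw]))
    set W' := W ⊓ LinearMap.ker (B v) ⊓ LinearMap.ker (B w)
    have hW' : ∀ x ∈ W', φ x ∈ W' := by
      rintro x ⟨⟨hxW, hxv : B v x = 0⟩, hxw : B w x = 0⟩
      exact ⟨⟨hW x hxW, hφ.apply_map_eq_zero_of_mem_eigenspace hν hv hxv⟩,
        hφ.apply_map_eq_zero_of_mem_eigenspace (inv_ne_zero hν) hw hxw⟩
    have hr' : finrank 𝕜 W' = 2 * r := by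
      have := W.finrank_inf_ker_add_of_map_eq_top _ (hB.map_prod_eq_top hvW hwW hvw)
      rw [LinearMap.ker_prod, ← inf_assoc, finrank_prod, finrank_self, hr] at this
      change finrank 𝕜 W' + (1 + 1) = _ at this
      omega
    obtain ⟨b, d, hbW, hb, hbd⟩ :=
      ih hW' (hB.separatingLeft_restrict_inf_ker hvW hwW hvw hnd) hr'
    refine ⟨Sum.elim (Fin.cons v (b ∘ Sum.inl)) (Fin.cons w (b ∘ Sum.inr)), Fin.cons ν d,
      ?_, ?_, ?_⟩
    · simp only [Sum.forall, Fin.forall_fin_succ]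
      exact ⟨⟨hvW, fun _ => (hbW _).1.1⟩, hwW, fun _ => (hbW _).1.1⟩
    · exact hB.apply_sumElim_cons_eq_J hvw hb (fun i => (hbW i).1.2) fun i => (hbW i).2
    · simp only [Sum.forall, Fin.forall_fin_succ]
      exact ⟨⟨hv, fun k => hbd (.inl k)⟩, hw, fun k => hbd (.inr k)⟩

end LinearMap.IsOrthogonal

end BilinForm

namespace Matrix

theorem isAlt_toBilin'_J (l R : Type*) [DecidableEq l] [Fintype l] [CommRing R] :
    (toBilin' (J l R)).IsAlt := by
  intro x
  simp [toBilin'_apply, J, Fintype.sum_sum_type, fromBlocks, one_apply, mul_comm]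

theorem isOrthogonal_toBilin'_toLin' {n R : Type*} [Fintype n] [DecidableEq n] [CommRing R]
    {M A : Matrix n n R} (h : Aᵀ * M * A = M) : (toBilin' M).IsOrthogonal (toLin' A) := by
  intro x y
  rw [← LinearMap.BilinForm.comp_apply, toBilin'_comp, h]

theorem transpose_mul_mul_apply_eq_toBilin' {n o R : Type*} [Fintype n] [DecidableEq n]
    [Fintype o] [DecidableEq o] [CommRing R] (M : Matrix n n R) (S : Matrix n o R) (p q : o) :
    (Sᵀ * M * S) p q = toBilin' M (S.col p) (S.col q) := by
  rw [← toBilin'_single (Sᵀ * M * S), ← toBilin'_comp]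
  simp

theorem mul_eq_mul_diagonal_iff {n o R : Type*} [Fintype n] [Fintype o] [DecidableEq o]
    [CommRing R] {A : Matrix n n R} {S : Matrix n o R} {δ : o → R} :
    A * S = S * diagonal δ ↔ ∀ q, A *ᵥ S.col q = δ q • S.col q := by
  rw [← Matrix.ext_iff, forall_comm]
  simp only [mul_diagonal]
  simp [funext_iff, mulVec, dotProduct, mul_apply, mul_comm]

theorem iSup_eigenspace_toLin'_eq_top {n K : Type*} [Fintype n] [DecidableEq n] [Field K]
    {A P : Matrix n n K} (hP : IsUnit P) (hA : (P⁻¹ * A * P).IsDiag) :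
    ⨆ μ, eigenspace (toLin' A) μ = ⊤ := by
  have hAP : A * P = P * diagonal (P⁻¹ * A * P).diag := by
    rw [hA.diagonal_diag, ← mul_assoc, ← mul_assoc,
      mul_nonsing_inv _ ((isUnit_iff_isUnit_det P).mp hP), one_mul]
  have hP_surj : Function.Surjective P.mulVecLin := by
    rw [coe_mulVecLin]
    exact mulVec_surjective_iff_isUnit.mpr hP
  rw [eq_top_iff, ← LinearMap.range_eq_top.mpr hP_surj, range_mulVecLin, Submodule.span_le]
  rintro _ ⟨j, rfl⟩
  exact Submodule.mem_iSup_of_mem _ (mem_eigenspace_iff.mpr (mul_eq_mul_diagonal_iff.mp hAP j))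

end Matrix

theorem stmt11_general (m : ℕ) (A : Matrix (Fin m ⊕ Fin m) (Fin m ⊕ Fin m) ℂ)
    (hA : A ∈ Matrix.symplecticGroup (Fin m) ℂ)
    (hdiag : ∃ P : Matrix (Fin m ⊕ Fin m) (Fin m ⊕ Fin m) ℂ, IsUnit P ∧ (P⁻¹ * A * P).IsDiag) :
    ∃ S ∈ Matrix.symplecticGroup (Fin m) ℂ, ∃ D : Matrix (Fin m) (Fin m) ℂ,
      D.IsDiag ∧ IsUnit D ∧ S⁻¹ * A * S = Matrix.fromBlocks D 0 0 D⁻¹ := by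
  obtain ⟨P, hP, hPAP⟩ := hdiag
  have hφ := isOrthogonal_toBilin'_toLin' (SymplecticGroup.mem_iff'.mp hA)
  have hsep : (toBilin' (J (Fin m) ℂ)).SeparatingLeft :=
    separatingLeft_toBilin'_iff.mpr (nondegenerate_of_det_ne_zero (isUnit_det_J _ _).ne_zero).1
  obtain ⟨b, d, -, hb, hbd⟩ := hφ.exists_symplectic_eigenfamily
    (iSup_eigenspace_toLin'_eq_top hP hPAP) (isAlt_toBilin'_J _ _) m (W := ⊤)
    (fun _ _ => trivial) (fun x hx => Subtype.ext (hsep x fun y => hx ⟨y, trivial⟩))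
    (by simp [two_mul])
  set S : Matrix (Fin m ⊕ Fin m) (Fin m ⊕ Fin m) ℂ := (of b)ᵀ
  have hS : S ∈ symplecticGroup (Fin m) ℂ := SymplecticGroup.mem_iff'.mpr <|
    ext fun p q => (transpose_mul_mul_apply_eq_toBilin' _ _ p q).trans (hb p q)
  have hAS : A * S = S * diagonal (Sum.elim d d⁻¹) :=
    mul_eq_mul_diagonal_iff.mpr fun q => mem_eigenspace_iff.mp (hbd q)
  have hd : ∀ k, d k ≠ 0 := fun k => left_ne_zero_of_mul_eq_one
    (hφ.mul_eq_one_of_apply_ne_zero (hbd (.inl k)) (hbd (.inr k)) (by rw [hb]; simp [J]))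
  have hDinv : (diagonal d)⁻¹ = diagonal d⁻¹ := inv_eq_left_inv <| by
    rw [diagonal_mul_diagonal, ← diagonal_one]
    exact congrArg diagonal (funext fun k => inv_mul_cancel₀ (hd k))
  refine ⟨S, hS, diagonal d, isDiag_diagonal d,
    isUnit_diagonal.mpr (Pi.isUnit_iff.mpr fun k => (hd k).isUnit), ?_⟩
  rw [hDinv, fromBlocks_diagonal, mul_assoc, hAS, ← mul_assoc,
    nonsing_inv_mul _ (SymplecticGroup.symplectic_det hS), one_mul]

/-- Every diagonalizable element of `Sp(2m,ℂ)` is conjugate within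
`Sp(2m,ℂ)` to a block-diagonal matrix with blocks `D` and `D⁻¹`, `D` diagonal invertible. -/
theorem stmt11 (m : ℕ) (hm : 1 ≤ m) (A : Matrix (Fin m ⊕ Fin m) (Fin m ⊕ Fin m) ℂ)
    (hA : A ∈ Matrix.symplecticGroup (Fin m) ℂ)
    (hdiag : ∃ P : Matrix (Fin m ⊕ Fin m) (Fin m ⊕ Fin m) ℂ, IsUnit P ∧ (P⁻¹ * A * P).IsDiag) :
    ∃ S ∈ Matrix.symplecticGroup (Fin m) ℂ, ∃ D : Matrix (Fin m) (Fin m) ℂ,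
      D.IsDiag ∧ IsUnit D ∧ S⁻¹ * A * S = Matrix.fromBlocks D 0 0 D⁻¹ :=
  stmt11_general m A hA hdiag
end

section
/- Let K be a number field and let v be a nonzero prime ideal of the ring of integers 𝓞_K of K (equivalently, a finite place of K). Then there exists a nonzero element α ∈ K such that: (i) α is not a square in K; (ii) φ(α) > 0 for every ring homomorphism φ : K → ℝ (i.e. α is totally positive); and (iii) the image of α in the v-adic completion K_v of K is a square in K_v. (This is the key existence claim in the proof of Lemma 4.1.1 of the paper, used to produce a totally real quadratic extension in which the place splits.) -/
/-!
Let `m = N(v)`, so `m ∈ v`, and pick a prime `w` containing `2m + 1` (hence `w ≠ v`) and a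
uniformizer `π` at `w`. By the Chinese remainder theorem there is an `α ∈ 𝓞_K` with
`α ≡ 1 mod 4v` and `α ≡ π mod w²`, and adding a large multiple of a positive integer in
`4v · w²` makes it totally positive. Its `w`-adic valuation is `1`, which is odd, so `α` is not
a square in `K`. In `K_v` we have `α = 1 + 4β` with `|β| < 1`, and `α = (1 + 2y)²` where `y` is
the fixed point of the contraction `y ↦ β - y²` on the ball of radius `|β|`.
-/

open IsDedekindDomain HeightOneSpectrum NumberField WithZero

theorem exists_add_sq_eq_of_norm_lt_one {L : Type*} [NormedField L] [IsUltrametricDist L]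
    [CompleteSpace L] {β : L} (hβ : ‖β‖ < 1) : ∃ y : L, y + y ^ 2 = β := by
  set s := Metric.closedBall (0 : L) ‖β‖
  have hmaps : Set.MapsTo (fun y => β - y ^ 2) s s := fun y hy => by
    have hy : ‖y‖ ≤ ‖β‖ := mem_closedBall_zero_iff.mp hy
    have hsq : ‖y ^ 2‖ ≤ ‖β‖ := by rw [norm_pow]; nlinarith [norm_nonneg y]
    have := IsUltrametricDist.norm_add_le_max β (-(y ^ 2))
    rw [norm_neg, ← sub_eq_add_neg] at this
    exact mem_closedBall_zero_iff.mpr (this.trans (max_le le_rfl hsq))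
  have hcontr : ContractingWith ‖β‖₊ (hmaps.restrict _ s s) := by
    refine ⟨hβ, LipschitzWith.of_dist_le_mul fun a b => ?_⟩
    have ha := mem_closedBall_zero_iff.mp a.2
    have hb := mem_closedBall_zero_iff.mp b.2
    rw [Subtype.dist_eq, Subtype.dist_eq, Set.MapsTo.val_restrict_apply,
      Set.MapsTo.val_restrict_apply, dist_eq_norm, dist_eq_norm, coe_nnnorm,
      show β - (a : L) ^ 2 - (β - (b : L) ^ 2) = (b + a) * (b - a) by ring, norm_mul,
      norm_sub_rev]
    gcongr
    exact (IsUltrametricDist.norm_add_le_max _ _).trans (max_le hb ha)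
  obtain ⟨y, -, hy, -⟩ := hcontr.exists_fixedPoint' Metric.isClosed_closedBall.isComplete hmaps
    (Metric.mem_closedBall_self (norm_nonneg β)) (edist_ne_top _ _)
  exact ⟨y, by linear_combination -hy.eq⟩

theorem exists_sq_eq_one_add_four_mul {L : Type*} [NormedField L] [IsUltrametricDist L]
    [CompleteSpace L] {β : L} (hβ : ‖β‖ < 1) : ∃ γ : L, γ ^ 2 = 1 + 4 * β := by
  obtain ⟨y, hy⟩ := exists_add_sq_eq_of_norm_lt_one hβ
  exact ⟨1 + 2 * y, by linear_combination 4 * hy⟩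

theorem Valuation.not_exists_sq_eq_of_eq_exp_odd {R : Type*} [CommRing R]
    (v : Valuation R ℤᵐ⁰) {α : R} {k : ℤ} (hk : Odd k) (hα : v α = exp k) :
    ¬ ∃ β : R, β ^ 2 = α := by
  rintro ⟨β, rfl⟩
  have hβ : v β ≠ 0 := fun h => exp_ne_zero (hα.symm.trans (by simp [h]))
  lift v β to ℤ using hβ with a ha
  rw [map_pow, ← ha, ← exp_nsmul, exp_inj, nsmul_eq_mul] at hα
  obtain ⟨j, rfl⟩ := hk
  omega

theorem NumberField.exists_nat_forall_pos_add_mul {K : Type*} [Field K] [NumberField K] (x : K)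
    {t : ℕ} (ht : 0 < t) : ∃ k : ℕ, ∀ φ : K →+* ℝ, 0 < φ (x + k * t) := by
  obtain ⟨k, hk⟩ := exists_nat_gt (∑ φ : K →+* ℝ, |φ x|)
  refine ⟨k, fun φ => ?_⟩
  have hφ : |φ x| ≤ ∑ ψ : K →+* ℝ, |ψ x| :=
    Finset.single_le_sum (f := fun ψ : K →+* ℝ => |ψ x|) (fun _ _ => abs_nonneg _)
      (Finset.mem_univ φ)
  have hkt : (k : ℝ) ≤ k * t := le_mul_of_one_le_right k.cast_nonneg (by exact_mod_cast ht)
  rw [map_add, map_mul, map_natCast, map_natCast]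
  linarith [neg_abs_le (φ x)]

namespace IsDedekindDomain.HeightOneSpectrum

variable {R : Type*} [CommRing R] [IsDedekindDomain R]

theorem exists_natCast_mem [Module.Free ℤ R] [Module.Finite ℤ R] {n : ℕ} (hn : 1 < n) :
    ∃ w : HeightOneSpectrum R, (n : R) ∈ w.asIdeal := by
  have hnorm : Ideal.absNorm (Ideal.span {(n : R)}) = n ^ Module.finrank ℤ R :=
    Ideal.absNorm_span_natCast n
  have hd : 0 < Module.finrank ℤ R := Module.finrank_pos
  have hne_top : Ideal.span {(n : R)} ≠ ⊤ := fun h => by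
    rw [h, Ideal.absNorm_top] at hnorm
    exact (Nat.one_lt_pow hd.ne' hn).ne hnorm
  have hne_bot : Ideal.span {(n : R)} ≠ ⊥ := fun h => by
    rw [h, Ideal.absNorm_bot] at hnorm
    exact (pow_pos (by omega) _).ne hnorm
  obtain ⟨M, hM, hle⟩ := Ideal.exists_le_maximal _ hne_top
  exact ⟨⟨M, hM.isPrime, ne_bot_of_le_ne_bot hne_bot hle⟩, hle (Ideal.mem_span_singleton_self _)⟩

theorem intValuation_eq_of_sub_mem_sq (w : HeightOneSpectrum R) {π a : R}
    (hπ : w.intValuation π = exp (-1)) (h : a - π ∈ w.asIdeal ^ 2) :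
    w.intValuation a = exp (-1) := by
  rw [← hπ]
  refine Valuation.map_eq_of_sub_lt _ ?_
  rw [hπ]
  exact ((w.intValuation_le_pow_iff_mem _ 2).mpr h).trans_lt (exp_lt_exp.mpr (by norm_num))

theorem exists_sq_eq_algebraMap_one_add_four_mul {K : Type*} [Field K] [Algebra R K]
    [IsFractionRing R K] [Module.Finite ℤ R] [Module.Free ℤ R] (v : HeightOneSpectrum R) {β : K}
    (hβ : v.valuation K β < 1) :
    ∃ γ : v.adicCompletion K, γ ^ 2 = algebraMap K (v.adicCompletion K) (1 + 4 * β) := by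
  have hβ' : ‖algebraMap K (v.adicCompletion K) β‖ < 1 := by
    rw [Valued.toNormedField.norm_lt_one_iff]
    exact (adicCompletion.valued_coe K v β).trans_lt hβ
  rw [map_add, map_mul, map_one, map_ofNat]
  exact _root_.exists_sq_eq_one_add_four_mul hβ'

end IsDedekindDomain.HeightOneSpectrum

/-- `(2m + 1)² - 4m(m + 1) = 1` is a Chinese remainder witness for `4I` and `J²`. -/
theorem NumberField.exists_mem_forall_pos_one_add_four_mul {K : Type*} [Field K] [NumberField K]
    {I J : Ideal (𝓞 K)} {m : ℕ} (hm0 : 0 < m) (hm : (m : 𝓞 K) ∈ I)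
    (hJ : ((2 * m + 1 : ℕ) : 𝓞 K) ∈ J) (π : 𝓞 K) :
    ∃ β ∈ I, 1 + 4 * β - π ∈ J ^ 2 ∧ ∀ φ : K →+* ℝ, 0 < φ (algebraMap (𝓞 K) K (1 + 4 * β)) := by
  obtain ⟨k, hk⟩ := exists_nat_forall_pos_add_mul
    (algebraMap (𝓞 K) K (1 + 4 * m * (m + 1) * (1 - π))) (t := 4 * m * (2 * m + 1) ^ 2)
    (by positivity)
  set β : 𝓞 K := m * ((m + 1) * (1 - π) + k * ((2 * m + 1 : ℕ) : 𝓞 K) ^ 2) with hβ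
  refine ⟨β, Ideal.mul_mem_right _ _ hm, ?_, fun φ => ?_⟩
  · rw [show 1 + 4 * β - π = ((2 * m + 1 : ℕ) : 𝓞 K) ^ 2 * (1 - π + 4 * k * m) by
      rw [hβ]; push_cast; ring]
    exact Ideal.mul_mem_right _ _ (Ideal.pow_mem_pow hJ 2)
  · have hshift : 1 + 4 * β =
        1 + 4 * m * (m + 1) * (1 - π) + ((k * (4 * m * (2 * m + 1) ^ 2) : ℕ) : 𝓞 K) := by
      rw [hβ]; push_cast; ring
    rw [hshift, map_add, map_natCast, Nat.cast_mul]
    exact hk φ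

/-- For a number field `K` and a finite place `v` of `K`, there is a
nonzero `α ∈ K` which is not a square in `K`, is totally positive, and becomes a square in
the `v`-adic completion `K_v`. -/
theorem stmt13 (K : Type*) [Field K] [NumberField K]
    (v : IsDedekindDomain.HeightOneSpectrum (NumberField.RingOfIntegers K)) :
    ∃ α : K, α ≠ 0 ∧ (¬ ∃ β : K, β ^ 2 = α) ∧ (∀ φ : K →+* ℝ, 0 < φ α) ∧
      ∃ γ : v.adicCompletion K, γ ^ 2 = algebraMap K (v.adicCompletion K) α := by
  set m := Ideal.absNorm v.asIdeal
  have hm1 : 1 < m := NumberField.HeightOneSpectrum.one_lt_absNorm v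
  obtain ⟨w, hw⟩ := exists_natCast_mem (R := 𝓞 K) (n := 2 * m + 1) (by omega)
  obtain ⟨π, hπ⟩ := w.intValuation_exists_uniformizer
  obtain ⟨β, hβv, hβw, hpos⟩ :=
    exists_mem_forall_pos_one_add_four_mul (by omega) (Ideal.absNorm_mem v.asIdeal) hw π
  have hwα : w.valuation K (algebraMap (𝓞 K) K (1 + 4 * β)) = exp (-1) := by
    rw [valuation_of_algebraMap]
    exact w.intValuation_eq_of_sub_mem_sq hπ hβw
  refine ⟨algebraMap (𝓞 K) K (1 + 4 * β), fun h => ?_,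
    (w.valuation K).not_exists_sq_eq_of_eq_exp_odd odd_neg_one hwα, hpos, ?_⟩
  · rw [h, map_zero] at hwα
    exact exp_ne_zero hwα.symm
  · rw [map_add, map_one, map_mul, map_ofNat]
    exact v.exists_sq_eq_algebraMap_one_add_four_mul ((valuation_lt_one_iff_mem v β).mpr hβv)
end
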